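/- arXiv:2506.17229 — 10 statements merged into one kernel-verified Lean document; each statement's English description precedes it below -/
import Mathlib

section
/- For every σ > 0 and κ > 0, the negative derivative of the log-density of the coupled exponential (generalized Pareto) density evaluated at the scale equals the inverse scale: −(d/dx)[ln p(x)] evaluated at x = σ equals 1/σ, where p(x) = (1/σ)·(1 + κ·x/σ)^(−(1+κ)/κ). -/
/-! Where `1 + κx/σ > 0` the log-density is `log (1/σ) - ((1+κ)/κ) · log (1 + κx/σ)`, so
`-(log p)'(x) = (1+κ)/(σ + κx)`; at `x = σ` the factor `1 + κ` cancels, leaving `1/σ`. -/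

open Real

theorem HasDerivAt.log_const_mul_rpow {f : ℝ → ℝ} {f' x : ℝ} (c α : ℝ) (hf : HasDerivAt f f' x)
    (hx : 0 < f x) (hc : c ≠ 0) :
    HasDerivAt (fun y => Real.log (c * f y ^ α)) (α * f' / f x) x := by
  have hlog : (fun y => Real.log (c * f y ^ α)) =ᶠ[nhds x]
      fun y => Real.log c + α * Real.log (f y) := by
    filter_upwards [hf.continuousAt.eventually (lt_mem_nhds hx)] with y hy
    rw [log_mul hc (rpow_pos_of_pos hy α).ne', log_rpow hy]
  rw [mul_div_assoc]
  exact (((hf.log hx.ne').const_mul α).const_add (Real.log c)).congr_of_eventuallyEq hlog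

theorem hasDerivAt_one_add_mul_div (κ σ x : ℝ) :
    HasDerivAt (fun y => 1 + κ * y / σ) (κ / σ) x := by
  simpa using (((hasDerivAt_id x).const_mul κ).div_const σ).const_add 1

/-- The negative derivative of the log-density of the coupled exponential
(generalized Pareto) density `p(x) = (1/σ)·(1 + κ·x/σ)^(−(1+κ)/κ)`, evaluated at
the scale `x = σ`, equals the inverse scale `1/σ`. -/
theorem stmt_3 (σ κ : ℝ) (hσ : 0 < σ) (hκ : 0 < κ) :
    -(deriv (fun x : ℝ =>
        Real.log ((1 / σ) * (1 + κ * x / σ) ^ (-(1 + κ) / κ))) σ)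
      = 1 / σ := by
  have hscale : 1 + κ * σ / σ = 1 + κ := by field_simp
  have hpos : 0 < 1 + κ * σ / σ := by rw [hscale]; linarith
  rw [((hasDerivAt_one_add_mul_div κ σ σ).log_const_mul_rpow (1 / σ) _ hpos
    (by positivity)).deriv, hscale]
  field_simp
end

section
/- For every σ > 0 and κ > 0, the independent-equals normalization of the coupled exponential density satisfies ∫₀^∞ p(x)^((1+2κ)/(1+κ)) dx = σ^(−κ/(1+κ))/(1+κ), where p(x) = (1/σ)·(1 + κ·x/σ)^(−(1+κ)/κ). -/
/-! Raising `p` to the power `q` merges the two exponents into `-(1+2κ)/κ < -1`, so `p(x)^q` is a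
constant multiple of `(1 + (κ/σ) x)^(-(1+2κ)/κ)`. After the substitution `y = 1 + (κ/σ) x` this is
the convergent power integral `∫₁^∞ y^e dy = -1/(e+1)`. -/

open Real MeasureTheory Set

theorem integral_Ioi_comp_add_right {E : Type*} [NormedAddCommGroup E] [NormedSpace ℝ E]
    (g : ℝ → E) (a c : ℝ) :
    ∫ x in Ioi a, g (x + c) = ∫ x in Ioi (a + c), g x := by
  rw [← (measurePreserving_add_right volume c).setIntegral_preimage_emb
    (measurableEmbedding_addRight c) g, preimage_add_const_Ioi, add_sub_cancel_right]

theorem integral_Ioi_one_add_mul_rpow {b e : ℝ} (hb : 0 < b) (he : e < -1) :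
    ∫ x in Ioi (0 : ℝ), (1 + b * x) ^ e = -1 / (b * (e + 1)) := by
  have hscale := integral_comp_mul_left_Ioi (fun y : ℝ => (y + 1) ^ e) 0 hb
  rw [mul_zero] at hscale
  simp_rw [add_comm (1 : ℝ), hscale, integral_Ioi_comp_add_right (· ^ e), zero_add,
    integral_Ioi_rpow_of_lt he zero_lt_one, one_rpow, smul_eq_mul]
  rw [inv_mul_eq_div, div_div, mul_comm]

theorem coupledExp_rpow_eq {σ κ x : ℝ} (hσ : 0 < σ) (hκ : 0 < κ) (hx : 0 ≤ x) :
    ((1 / σ) * (1 + κ * x / σ) ^ (-(1 + κ) / κ)) ^ ((1 + 2 * κ) / (1 + κ))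
      = σ ^ (-((1 + 2 * κ) / (1 + κ))) * (1 + κ / σ * x) ^ (-(1 + 2 * κ) / κ) := by
  have hbase : 0 ≤ 1 + κ * x / σ := by positivity
  have h1κ : 1 + κ ≠ 0 := by positivity
  rw [mul_rpow (by positivity) (rpow_nonneg hbase _), ← rpow_mul hbase, one_div,
    inv_rpow hσ.le, rpow_neg hσ.le]
  congr 2
  · ring
  · field_simp

/-- The independent-equals normalization of the coupled exponential density:
`∫₀^∞ p(x)^((1+2κ)/(1+κ)) dx = σ^(−κ/(1+κ))/(1+κ)` where
`p(x) = (1/σ)·(1 + κ·x/σ)^(−(1+κ)/κ)`. -/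
theorem stmt_5 (σ κ : ℝ) (hσ : 0 < σ) (hκ : 0 < κ) :
    (∫ x in Set.Ioi (0 : ℝ),
        ((1 / σ) * (1 + κ * x / σ) ^ (-(1 + κ) / κ)) ^ ((1 + 2 * κ) / (1 + κ)))
      = σ ^ (-κ / (1 + κ)) / (1 + κ) := by
  have he : -(1 + 2 * κ) / κ < -1 := by rw [div_lt_iff₀ hκ]; linarith
  rw [setIntegral_congr_fun measurableSet_Ioi fun x hx => coupledExp_rpow_eq hσ hκ (le_of_lt hx),
    integral_const_mul, integral_Ioi_one_add_mul_rpow (div_pos hκ hσ) he]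
  have hσ_exp : -κ / (1 + κ) = -((1 + 2 * κ) / (1 + κ)) + 1 := by field_simp; ring
  have he_succ : -(1 + 2 * κ) / κ + 1 = -(1 + κ) / κ := by field_simp; ring
  rw [hσ_exp, rpow_add_one hσ.ne', he_succ]
  field_simp
end

section
/- For every σ > 0 and κ > 0, the second independent-equals moment of the centered coupled Gaussian density equals its squared scale: (∫_{−∞}^{∞} x²·p(x)^((1+3κ)/(1+κ)) dx) / (∫_{−∞}^{∞} p(x)^((1+3κ)/(1+κ)) dx) = σ², where p(x) = (1/Z)·(1 + κ·(x/σ)²)^(−(1+κ)/(2κ)) and Z = σ·√(π/κ)·Γ(1/(2κ))/Γ((1+κ)/(2κ)). In particular this generalized second moment is finite for every κ > 0, even when the ordinary variance diverges. -/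
/-!
Raising `p` to the power `q = (1 + 3κ)/(1 + κ)` gives a constant multiple of
`(1 + (b x)²)^(-s)` with `b = √κ / σ` and `s = (1 + 3κ)/(2κ)`, so the normalizing constant
cancels from the ratio. Since `2s > 3`, the function `x (1 + (b x)²)^(1 - s)` vanishes at `±∞`,
and integrating its derivative over `ℝ` gives
`∫ (1 + (b x)²)^(-s) = (2s - 3) b² ∫ x² (1 + (b x)²)^(-s)`.
Finally `(2s - 3) b² = κ⁻¹ · κ / σ² = 1 / σ²`.
-/

open Real MeasureTheory Filter Topology

section

variable {b s : ℝ}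

theorem integrable_one_add_mul_sq_rpow_neg (hb : b ≠ 0) (hs : 1 < 2 * s) :
    Integrable fun x : ℝ => (1 + (b * x) ^ 2) ^ (-s) := by
  have h := integrable_rpow_neg_one_add_norm_sq (E := ℝ) (μ := volume) (r := 2 * s)
    (by simpa using hs)
  simp only [Real.norm_eq_abs, sq_abs] at h
  rw [show -(2 * s) / 2 = -s by ring] at h
  exact h.comp_mul_left' hb

theorem integrable_sq_mul_one_add_mul_sq_rpow_neg (hb : b ≠ 0) (hs : 3 < 2 * s) :
    Integrable fun x : ℝ => x ^ 2 * (1 + (b * x) ^ 2) ^ (-s) := by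
  refine ((integrable_one_add_mul_sq_rpow_neg hb (s := s - 1) (by linarith)).const_mul
    (b ^ 2)⁻¹).mono' (by fun_prop) (Eventually.of_forall fun x => ?_)
  have hu : 0 < 1 + (b * x) ^ 2 := by positivity
  have hx : x ^ 2 ≤ (b ^ 2)⁻¹ * (1 + (b * x) ^ 2) := by
    rw [le_inv_mul_iff₀ (by positivity)]
    nlinarith
  rw [Real.norm_of_nonneg (by positivity), show -(s - 1) = 1 + -s by ring, Real.rpow_add hu,
    Real.rpow_one, ← mul_assoc]
  gcongr

theorem tendsto_mul_one_add_mul_sq_rpow_atTop (hb : b ≠ 0) (hs : 3 < 2 * s) :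
    Tendsto (fun x : ℝ => x * (1 + (b * x) ^ 2) ^ (1 - s)) atTop (𝓝 0) := by
  have hbound : ∀ x : ℝ, 0 ≤ x →
      x * (1 + (b * x) ^ 2) ^ (1 - s) ≤ |b|⁻¹ * (1 + (b * x) ^ 2) ^ (-(s - 3 / 2)) := by
    intro x hx
    have hu : 0 < 1 + (b * x) ^ 2 := by positivity
    have hsqrt : x ≤ |b|⁻¹ * (1 + (b * x) ^ 2) ^ (1 / 2 : ℝ) := by
      rw [le_inv_mul_iff₀ (abs_pos.2 hb), ← Real.sqrt_eq_rpow]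
      refine Real.le_sqrt_of_sq_le ?_
      rw [mul_pow, sq_abs, mul_pow]
      linarith
    calc x * (1 + (b * x) ^ 2) ^ (1 - s)
        ≤ |b|⁻¹ * (1 + (b * x) ^ 2) ^ (1 / 2 : ℝ) * (1 + (b * x) ^ 2) ^ (1 - s) := by gcongr
      _ = |b|⁻¹ * (1 + (b * x) ^ 2) ^ (-(s - 3 / 2)) := by
        rw [mul_assoc, ← Real.rpow_add hu]; ring_nf
  have hgrow : Tendsto (fun x : ℝ => 1 + (b * x) ^ 2) atTop atTop := by
    simp_rw [mul_pow]
    exact tendsto_atTop_add_const_left _ _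
      ((tendsto_pow_atTop two_ne_zero).const_mul_atTop (by positivity))
  have hdecay := ((tendsto_rpow_neg_atTop (by linarith : 0 < s - 3 / 2)).comp hgrow).const_mul
    |b|⁻¹
  rw [mul_zero] at hdecay
  refine tendsto_of_tendsto_of_tendsto_of_le_of_le' tendsto_const_nhds hdecay ?_ ?_
  · filter_upwards [eventually_ge_atTop 0] with x hx using by positivity
  · filter_upwards [eventually_ge_atTop 0] with x hx using hbound x hx

theorem hasDerivAt_mul_one_add_mul_sq_rpow (x : ℝ) :
    HasDerivAt (fun x : ℝ => x * (1 + (b * x) ^ 2) ^ (1 - s))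
      ((1 + (b * x) ^ 2) ^ (-s) - (2 * s - 3) * b ^ 2 * (x ^ 2 * (1 + (b * x) ^ 2) ^ (-s))) x := by
  have hu : 0 < 1 + (b * x) ^ 2 := by positivity
  have hinner : HasDerivAt (fun x : ℝ => 1 + (b * x) ^ 2) (2 * b ^ 2 * x) x := by
    refine ((((hasDerivAt_id' x).const_mul b).fun_pow 2).const_add 1).congr_deriv ?_
    norm_num
    ring
  refine ((hasDerivAt_id x).mul (hinner.rpow_const (Or.inl hu.ne'))).congr_deriv ?_
  rw [show 1 - s - 1 = -s by ring, show 1 - s = 1 + -s by ring, Real.rpow_add hu, Real.rpow_one]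
  simp only [id_eq]
  ring

theorem integral_one_add_mul_sq_rpow_neg_eq (hb : b ≠ 0) (hs : 3 < 2 * s) :
    ∫ x : ℝ, (1 + (b * x) ^ 2) ^ (-s)
      = (2 * s - 3) * b ^ 2 * ∫ x : ℝ, x ^ 2 * (1 + (b * x) ^ 2) ^ (-s) := by
  have hg := integrable_one_add_mul_sq_rpow_neg hb (s := s) (by linarith)
  have hx2g := (integrable_sq_mul_one_add_mul_sq_rpow_neg hb hs).const_mul ((2 * s - 3) * b ^ 2)
  have htop := tendsto_mul_one_add_mul_sq_rpow_atTop hb hs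
  have hbot : Tendsto (fun x : ℝ => x * (1 + (b * x) ^ 2) ^ (1 - s)) atBot (𝓝 0) := by
    simpa [Function.comp_def] using (htop.comp tendsto_neg_atBot_atTop).neg
  have h := integral_of_hasDerivAt_of_tendsto hasDerivAt_mul_one_add_mul_sq_rpow
    (hg.sub hx2g) hbot htop
  rw [integral_sub hg hx2g, integral_const_mul, sub_self, sub_eq_zero] at h
  exact h

theorem integral_one_add_mul_sq_rpow_neg_pos (hb : b ≠ 0) (hs : 1 < 2 * s) :
    0 < ∫ x : ℝ, (1 + (b * x) ^ 2) ^ (-s) := by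
  refine (integral_pos_iff_support_of_nonneg (fun x => by positivity)
    (integrable_one_add_mul_sq_rpow_neg hb hs)).2 ?_
  rw [Function.support_eq_univ fun x => by positivity]
  simp

theorem integral_sq_mul_one_add_mul_sq_rpow_neg_div (hb : b ≠ 0) (hs : 3 < 2 * s) :
    (∫ x : ℝ, x ^ 2 * (1 + (b * x) ^ 2) ^ (-s)) / ∫ x : ℝ, (1 + (b * x) ^ 2) ^ (-s)
      = ((2 * s - 3) * b ^ 2)⁻¹ := by
  have hpos := integral_one_add_mul_sq_rpow_neg_pos (s := s) hb (by linarith)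
  rw [integral_one_add_mul_sq_rpow_neg_eq hb hs] at hpos ⊢
  exact div_mul_cancel_right₀ (right_ne_zero_of_mul hpos.ne') _

end

/-- The second independent-equals moment of the centered coupled Gaussian
(Student's t) density equals its squared scale:
`(∫ x²·p(x)^((1+3κ)/(1+κ)) dx)/(∫ p(x)^((1+3κ)/(1+κ)) dx) = σ²`, where
`p(x) = (1/Z)·(1 + κ·(x/σ)²)^(−(1+κ)/(2κ))` and
`Z = σ·√(π/κ)·Γ(1/(2κ))/Γ((1+κ)/(2κ))`. -/
theorem stmt_7 (σ κ : ℝ) (hσ : 0 < σ) (hκ : 0 < κ) :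
    (∫ x : ℝ,
        x ^ 2 *
          ((1 / (σ * Real.sqrt (π / κ) * Real.Gamma (1 / (2 * κ)) /
              Real.Gamma ((1 + κ) / (2 * κ)))) *
            (1 + κ * (x / σ) ^ 2) ^ (-(1 + κ) / (2 * κ))) ^ ((1 + 3 * κ) / (1 + κ))) /
      (∫ x : ℝ,
        ((1 / (σ * Real.sqrt (π / κ) * Real.Gamma (1 / (2 * κ)) /
            Real.Gamma ((1 + κ) / (2 * κ)))) *
          (1 + κ * (x / σ) ^ 2) ^ (-(1 + κ) / (2 * κ))) ^ ((1 + 3 * κ) / (1 + κ)))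
      = σ ^ 2 := by
  set c := 1 / (σ * Real.sqrt (π / κ) * Real.Gamma (1 / (2 * κ)) /
      Real.Gamma ((1 + κ) / (2 * κ)))
  have hc : 0 < c := by
    have := Real.Gamma_pos_of_pos (by positivity : 0 < 1 / (2 * κ))
    have := Real.Gamma_pos_of_pos (by positivity : 0 < (1 + κ) / (2 * κ))
    positivity
  have hb : √κ / σ ≠ 0 := by positivity
  have hs : 3 < 2 * ((1 + 3 * κ) / (2 * κ)) := by
    have h2s : 2 * ((1 + 3 * κ) / (2 * κ)) = 3 + κ⁻¹ := by field_simp; ring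
    rw [h2s]
    linarith [inv_pos.2 hκ]
  have hpow : ∀ x : ℝ,
      (c * (1 + κ * (x / σ) ^ 2) ^ (-(1 + κ) / (2 * κ))) ^ ((1 + 3 * κ) / (1 + κ))
        = c ^ ((1 + 3 * κ) / (1 + κ)) *
          (1 + (√κ / σ * x) ^ 2) ^ (-((1 + 3 * κ) / (2 * κ))) := by
    intro x
    rw [show κ * (x / σ) ^ 2 = (√κ / σ * x) ^ 2 by
      rw [mul_pow, div_pow, div_pow, sq_sqrt hκ.le]; ring,
      Real.mul_rpow hc.le (by positivity), ← Real.rpow_mul (by positivity)]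
    congr 2
    field_simp
  simp only [hpow, mul_left_comm (_ ^ 2) (c ^ ((1 + 3 * κ) / (1 + κ)))]
  rw [integral_const_mul, integral_const_mul, mul_div_mul_left _ _ (by positivity),
    integral_sq_mul_one_add_mul_sq_rpow_neg_div hb hs, div_pow, sq_sqrt hκ.le]
  field_simp
  ring
end

section
/- Let κ ≥ 0 (with κ > 0 for the closed form) and N ≥ 1. For every probability vector p = (p₁, …, p_N), the Type I coupled entropy satisfies H_κ(p) ≤ H_κ(u_N), where u_N is the uniform distribution on N states, and H_κ(u_N) = (1/κ)·(N^(κ/(1+κ)) − 1) = ln_κ(N^(1/(1+κ))). -/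
open Real

/-!
For `r = 1 + κ/(1+κ) ≥ 1` the power sum `∑ pᵢ ^ r` of a probability vector on `N` states is at
least `N ^ (1 - r)` (Hölder / power-mean inequality), with equality at the uniform distribution.
Since `x ↦ (1/κ) (x⁻¹ - 1)` is antitone for `κ > 0`, the uniform distribution maximises the
entropy, and its value is `(1/κ) (N ^ (κ/(1+κ)) - 1)` because `1 - r = -κ/(1+κ)`.
-/

lemma card_pos_of_sum_eq_one {ι : Type*} [Fintype ι] {p : ι → ℝ} (hsum : ∑ i, p i = 1) :
    0 < Fintype.card ι := by
  rcases isEmpty_or_nonempty ι with h | h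
  · simp at hsum
  · exact Fintype.card_pos

lemma card_rpow_one_sub_le_sum_rpow {ι : Type*} [Fintype ι] {p : ι → ℝ} (hp : ∀ i, 0 ≤ p i)
    (hsum : ∑ i, p i = 1) {r : ℝ} (hr : 1 ≤ r) :
    (Fintype.card ι : ℝ) ^ (1 - r) ≤ ∑ i, p i ^ r := by
  have hn : (0 : ℝ) < Fintype.card ι := by exact_mod_cast card_pos_of_sum_eq_one hsum
  have holder := rpow_sum_le_const_mul_sum_rpow_of_nonneg Finset.univ hr (fun i _ => hp i)
  rw [hsum, one_rpow, Finset.card_univ] at holder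
  calc (Fintype.card ι : ℝ) ^ (1 - r)
      ≤ (Fintype.card ι : ℝ) ^ (1 - r) * ((Fintype.card ι : ℝ) ^ (r - 1) * ∑ i, p i ^ r) :=
        le_mul_of_one_le_right (by positivity) holder
    _ = ∑ i, p i ^ r := by rw [← mul_assoc, ← rpow_add hn]; simp

lemma sum_const_inv_rpow {n : ℕ} (hn : (0 : ℝ) < n) (r : ℝ) :
    ∑ _i : Fin n, ((n : ℝ)⁻¹) ^ r = (n : ℝ) ^ (1 - r) := by
  rw [Finset.sum_const, Finset.card_univ, Fintype.card_fin, nsmul_eq_mul, inv_rpow hn.le,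
    ← rpow_neg hn.le, sub_eq_add_neg, rpow_add hn, rpow_one]

theorem stmt_11_general (κ : ℝ) (hκ : 0 < κ) (N : ℕ)
    (p : Fin N → ℝ) (hp : ∀ i, 0 ≤ p i) (hsum : ∑ i, p i = 1) :
    (1 / κ) * (-1 + (∑ i, p i ^ (1 + κ / (1 + κ)))⁻¹)
        ≤ (1 / κ) * (-1 + (∑ _i : Fin N, ((N : ℝ)⁻¹) ^ (1 + κ / (1 + κ)))⁻¹)
    ∧ (1 / κ) * (-1 + (∑ _i : Fin N, ((N : ℝ)⁻¹) ^ (1 + κ / (1 + κ)))⁻¹)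
        = (1 / κ) * ((N : ℝ) ^ (κ / (1 + κ)) - 1)
    ∧ (1 / κ) * ((N : ℝ) ^ (κ / (1 + κ)) - 1)
        = (((N : ℝ) ^ ((1 : ℝ) / (1 + κ))) ^ κ - 1) / κ := by
  have hN : (0 : ℝ) < N := by
    exact_mod_cast Fintype.card_fin N ▸ card_pos_of_sum_eq_one hsum
  have hr : 1 ≤ 1 + κ / (1 + κ) := le_add_of_nonneg_right (by positivity)
  have hexp : 1 - (1 + κ / (1 + κ)) = -(κ / (1 + κ)) := by ring
  have hbound := card_rpow_one_sub_le_sum_rpow hp hsum hr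
  rw [Fintype.card_fin, hexp, rpow_neg hN.le] at hbound
  rw [sum_const_inv_rpow hN, hexp, rpow_neg hN.le, inv_inv, ← rpow_mul hN.le,
    show 1 / (1 + κ) * κ = κ / (1 + κ) by ring]
  refine ⟨?_, by ring, by ring⟩
  gcongr
  exact inv_le_of_inv_le₀ (by positivity) hbound

/-- Maximality axiom for the Type I coupled entropy with `κ > 0`: for every
probability vector `p` on `N` states, `H_κ(p) ≤ H_κ(u_N)` where `u_N` is the
uniform distribution, and `H_κ(u_N) = (1/κ)·(N^(κ/(1+κ)) − 1) = ln_κ(N^(1/(1+κ)))`. -/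
theorem stmt_11 (κ : ℝ) (hκ : 0 < κ) (N : ℕ) (hN : 1 ≤ N)
    (p : Fin N → ℝ) (hp : ∀ i, 0 ≤ p i) (hsum : ∑ i, p i = 1) :
    (1 / κ) * (-1 + (∑ i, p i ^ (1 + κ / (1 + κ)))⁻¹)
        ≤ (1 / κ) * (-1 + (∑ _i : Fin N, ((N : ℝ)⁻¹) ^ (1 + κ / (1 + κ)))⁻¹)
    ∧ (1 / κ) * (-1 + (∑ _i : Fin N, ((N : ℝ)⁻¹) ^ (1 + κ / (1 + κ)))⁻¹)
        = (1 / κ) * ((N : ℝ) ^ (κ / (1 + κ)) - 1)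
    ∧ (1 / κ) * ((N : ℝ) ^ (κ / (1 + κ)) - 1)
        = (((N : ℝ) ^ ((1 : ℝ) / (1 + κ))) ^ κ - 1) / κ :=
  stmt_11_general κ hκ N p hp hsum
end

section
/- Let ρ > 1 and set κ = 1/(ρ−1), and let N ≥ 1 be an integer such that W = N^ρ is a positive integer. Then the Type I coupled entropy of the uniform distribution on W states grows extensively (linearly) in N: H_κ(u_W) = (1/κ)·(W^(κ/(1+κ)) − 1) = (ρ − 1)·(N − 1). -/
open Real

lemma div_one_add_eq_one_div_of_eq_one_div_sub_one {ρ κ : ℝ} (hρ : ρ ≠ 1)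
    (hκ : κ = 1 / (ρ - 1)) : κ / (1 + κ) = 1 / ρ := by
  have hρ' : ρ - 1 ≠ 0 := sub_ne_zero.mpr hρ
  rw [hκ, one_add_div hρ', div_div_div_cancel_right₀ hρ', sub_add_cancel]

theorem stmt_12_general (ρ : ℝ) (hρ : 1 < ρ) (κ : ℝ) (hκ : κ = 1 / (ρ - 1))
    (N : ℕ) (W : ℕ) (hWN : (W : ℝ) = (N : ℝ) ^ ρ) :
    (1 / κ) * ((W : ℝ) ^ (κ / (1 + κ)) - 1) = (ρ - 1) * ((N : ℝ) - 1) := by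
  have hW : (W : ℝ) ^ (1 / ρ) = N := by
    rw [hWN, one_div, rpow_rpow_inv N.cast_nonneg (zero_lt_one.trans hρ).ne']
  rw [div_one_add_eq_one_div_of_eq_one_div_sub_one hρ.ne' hκ, hW, hκ, one_div_one_div]

/-- Extensive growth of the Type I coupled entropy at the matched coupling: for
`ρ > 1`, `κ = 1/(ρ−1)`, and `W = N^ρ` equiprobable states, the coupled entropy of
the uniform distribution on `W` states, `(1/κ)·(W^(κ/(1+κ)) − 1)`, grows linearly
in `N`: it equals `(ρ − 1)·(N − 1)`. -/
theorem stmt_12 (ρ : ℝ) (hρ : 1 < ρ) (κ : ℝ) (hκ : κ = 1 / (ρ - 1))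
    (N : ℕ) (hN : 1 ≤ N) (W : ℕ) (hW : 0 < W) (hWN : (W : ℝ) = (N : ℝ) ^ ρ) :
    (1 / κ) * ((W : ℝ) ^ (κ / (1 + κ)) - 1) = (ρ - 1) * ((N : ℝ) - 1) :=
  stmt_12_general ρ hρ κ hκ N W hWN
end

section
/- Let p = (p₁, …, p_N) be a probability vector with all p_i > 0. Then the Type I coupled entropy converges to the Shannon entropy as the coupling vanishes: lim_{κ → 0⁺} (1/κ)·(−1 + (Σ_i p_i^(1+κ/(1+κ)))^(−1)) = −Σ_i p_i·ln p_i. -/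
open Real Filter Topology

/-!
The quantity `(1/κ)·(−1 + g(κ)⁻¹)`, with `g(κ) = Σ_i p_i ^ (1 + κ/(1+κ))`, is the difference
quotient of `1/g` at `0`, since `g(0) = Σ_i p_i = 1`. The exponent has derivative `1` at `0`, so
`g'(0) = Σ_i p_i log p_i`, and the limit is `(1/g)'(0) = −g'(0)`.
-/

lemma hasDerivAt_one_add_div_one_add : HasDerivAt (fun κ : ℝ => 1 + κ / (1 + κ)) 1 0 := by
  have h := (hasDerivAt_id (0 : ℝ)).fun_div ((hasDerivAt_const (0 : ℝ) (1 : ℝ)).add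
    (hasDerivAt_id 0)) (by norm_num)
  simpa using h.const_add 1

lemma hasDerivAt_sum_const_rpow {ι : Type*} (s : Finset ι) {p : ι → ℝ}
    (hp : ∀ i ∈ s, 0 < p i) {e : ℝ → ℝ} {e' x : ℝ} (he : HasDerivAt e e' x) :
    HasDerivAt (fun κ => ∑ i ∈ s, p i ^ e κ) (∑ i ∈ s, log (p i) * e' * p i ^ e x) x :=
  HasDerivAt.fun_sum fun i hi => he.const_rpow (hp i hi)

lemma tendsto_div_neg_one_add_inv_of_hasDerivAt {g : ℝ → ℝ} {g' : ℝ} (hg : HasDerivAt g g' 0)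
    (hg0 : g 0 = 1) :
    Tendsto (fun κ => (1 / κ) * (-1 + (g κ)⁻¹)) (𝓝[>] 0) (𝓝 (-g')) := by
  have h := (hg.inv (by simp [hg0])).tendsto_slope_zero_right
  simp only [hg0, zero_add, Pi.inv_apply, inv_one, one_pow, div_one, smul_eq_mul] at h
  convert h using 2 with κ
  ring

/-- The Type I coupled entropy converges to the Shannon entropy as the coupling
vanishes: `lim_{κ→0⁺} (1/κ)·(−1 + (Σ_i p_i^(1+κ/(1+κ)))⁻¹) = −Σ_i p_i·ln p_i`. -/
theorem stmt_13 (N : ℕ) (p : Fin N → ℝ)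
    (hp : ∀ i, 0 < p i) (hsum : ∑ i, p i = 1) :
    Filter.Tendsto
      (fun κ : ℝ => (1 / κ) * (-1 + (∑ i, p i ^ (1 + κ / (1 + κ)))⁻¹))
      (nhdsWithin 0 (Set.Ioi 0))
      (nhds (-∑ i, p i * Real.log (p i))) := by
  have hg := hasDerivAt_sum_const_rpow Finset.univ (fun i _ => hp i)
    hasDerivAt_one_add_div_one_add
  simp only [zero_div, add_zero, rpow_one, mul_one] at hg
  simpa only [mul_comm (log _)] using
    tendsto_div_neg_one_add_inv_of_hasDerivAt hg (by simpa using hsum)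
end

section
/- For every σ > 0 and κ > 0, the continuous Type I coupled entropy of the coupled exponential density equals one plus the coupled logarithm of the scale with deformation κ/(1+κ): ∫₀^∞ (p(x)^q / ∫₀^∞ p(y)^q dy) · ln_κ(p(x)^(−1/(1+κ))) dx = 1 + ln_{κ/(1+κ)}(σ) = 1 + ((1+κ)/κ)·(σ^(κ/(1+κ)) − 1), where p(x) = (1/σ)·(1 + κ·x/σ)^(−(1+κ)/κ) and q = (1+2κ)/(1+κ). -/
/-!
Write `t = 1 + κx/σ`. The escort weight `p^q` is a constant multiple of `t^(-(1+2κ)/κ)`, and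
`(p^(-1/(1+κ)))^κ = σ^(κ/(1+κ)) · t` is affine in `x`, so the entropy reduces to the two
Pareto-type integrals `∫₀^∞ (1 + a x)^(-r) dx = 1 / (a (r - 1))` with `r = (1+2κ)/κ` and
`r = (1+κ)/κ`.
-/

open Real MeasureTheory Set

lemma preimage_const_add_Ioi_one : ((1 : ℝ) + ·) ⁻¹' Ioi 1 = Ioi 0 := by ext x; simp

lemma integrableOn_Ioi_one_add_rpow_neg {r : ℝ} (hr : 1 < r) :
    IntegrableOn (fun x : ℝ => (1 + x) ^ (-r)) (Ioi 0) := by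
  have h := ((measurePreserving_add_left volume (1 : ℝ)).integrableOn_comp_preimage
    (measurableEmbedding_addLeft 1) (f := fun y => y ^ (-r)) (s := Ioi 1)).mpr
    (integrableOn_Ioi_rpow_of_lt (by linarith) one_pos)
  simpa only [preimage_const_add_Ioi_one, Function.comp_def] using h

lemma integral_Ioi_one_add_rpow_neg {r : ℝ} (hr : 1 < r) :
    ∫ x in Ioi (0 : ℝ), (1 + x) ^ (-r) = 1 / (r - 1) := by
  have h := (measurePreserving_add_left volume (1 : ℝ)).setIntegral_preimage_emb
    (measurableEmbedding_addLeft 1) (fun y => y ^ (-r)) (Ioi 1)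
  rw [preimage_const_add_Ioi_one] at h
  rw [h, integral_Ioi_rpow_of_lt (by linarith) one_pos, one_rpow,
    show -r + 1 = -(r - 1) by ring, div_neg, neg_div, neg_neg]

lemma integrableOn_Ioi_one_add_mul_rpow_neg {a r : ℝ} (ha : 0 < a) (hr : 1 < r) :
    IntegrableOn (fun x : ℝ => (1 + a * x) ^ (-r)) (Ioi 0) :=
  (integrableOn_Ioi_comp_mul_left_iff (fun y => (1 + y) ^ (-r)) 0 ha).mpr
    (by simpa only [mul_zero] using integrableOn_Ioi_one_add_rpow_neg hr)

lemma integral_Ioi_one_add_mul_rpow_neg {a r : ℝ} (ha : 0 < a) (hr : 1 < r) :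
    ∫ x in Ioi (0 : ℝ), (1 + a * x) ^ (-r) = 1 / (a * (r - 1)) := by
  rw [integral_comp_mul_left_Ioi (fun y => (1 + y) ^ (-r)) 0 ha, mul_zero,
    integral_Ioi_one_add_rpow_neg hr, smul_eq_mul, ← one_div, one_div_mul_one_div]

lemma one_div_mul_rpow_rpow {σ t : ℝ} (hσ : 0 < σ) (ht : 0 < t) (e s : ℝ) :
    ((1 / σ) * t ^ e) ^ s = σ ^ (-s) * t ^ (e * s) := by
  rw [mul_rpow (by positivity) (by positivity), div_rpow zero_le_one hσ.le, one_rpow,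
    one_div, ← rpow_neg hσ.le, ← rpow_mul ht.le]

section CoupledExponential

variable {σ κ t : ℝ}

lemma coupledExp_rpow_escort (hσ : 0 < σ) (hκ : κ ≠ 0) (h1κ : 1 + κ ≠ 0) (ht : 0 < t) :
    ((1 / σ) * t ^ (-(1 + κ) / κ)) ^ ((1 + 2 * κ) / (1 + κ))
      = σ ^ (-((1 + 2 * κ) / (1 + κ))) * t ^ (-((1 + 2 * κ) / κ)) := by
  rw [one_div_mul_rpow_rpow hσ ht]
  congr 2
  field_simp

lemma coupledExp_rpow_log (hσ : 0 < σ) (hκ : κ ≠ 0) (h1κ : 1 + κ ≠ 0) (ht : 0 < t) :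
    (((1 / σ) * t ^ (-(1 + κ) / κ)) ^ (-(1 / (1 + κ)))) ^ κ = σ ^ (κ / (1 + κ)) * t := by
  rw [one_div_mul_rpow_rpow hσ ht, neg_neg, mul_rpow (by positivity) (by positivity),
    ← rpow_mul hσ.le, ← rpow_mul ht.le,
    show -(1 + κ) / κ * -(1 / (1 + κ)) * κ = 1 by field_simp, rpow_one]
  congr 2
  field_simp

lemma integral_Ioi_coupledExp_rpow_escort (hσ : 0 < σ) (hκ : 0 < κ) :
    ∫ x in Ioi (0 : ℝ), ((1 / σ) * (1 + κ / σ * x) ^ (-(1 + κ) / κ)) ^ ((1 + 2 * κ) / (1 + κ))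
      = σ ^ (-((1 + 2 * κ) / (1 + κ))) * (σ / (1 + κ)) := by
  have ha : 0 < κ / σ := div_pos hκ hσ
  rw [setIntegral_congr_fun measurableSet_Ioi fun x hx =>
      coupledExp_rpow_escort hσ hκ.ne' (by positivity) (add_pos one_pos (mul_pos ha hx)),
    integral_const_mul, integral_Ioi_one_add_mul_rpow_neg ha (by rw [lt_div_iff₀ hκ]; linarith),
    div_sub_one hκ.ne', show 1 + 2 * κ - κ = 1 + κ by ring]
  field_simp

lemma coupledExp_escort_mul_coupledLog (hσ : 0 < σ) (hκ : 0 < κ) (ht : 0 < t) :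
    ((1 / σ) * t ^ (-(1 + κ) / κ)) ^ ((1 + 2 * κ) / (1 + κ))
        / (σ ^ (-((1 + 2 * κ) / (1 + κ))) * (σ / (1 + κ)))
      * (((((1 / σ) * t ^ (-(1 + κ) / κ)) ^ (-(1 / (1 + κ)))) ^ κ - 1) / κ)
      = (1 + κ) / (σ * κ) * (σ ^ (κ / (1 + κ)) * t ^ (-((1 + κ) / κ))
          - t ^ (-((1 + 2 * κ) / κ))) := by
  have h1κ : 1 + κ ≠ 0 := by positivity
  have hshift : t ^ (-((1 + 2 * κ) / κ)) * t = t ^ (-((1 + κ) / κ)) := by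
    rw [← rpow_add_one ht.ne']
    congr 1
    field_simp
    ring
  rw [coupledExp_rpow_escort hσ hκ.ne' h1κ ht, coupledExp_rpow_log hσ hκ.ne' h1κ ht, ← hshift]
  field_simp

end CoupledExponential

/-- The continuous Type I coupled entropy of the coupled exponential density equals
one plus the coupled logarithm of the scale with deformation `κ/(1+κ)`:
`∫₀^∞ (p(x)^q/∫₀^∞ p(y)^q dy)·ln_κ(p(x)^(−1/(1+κ))) dx = 1 + ((1+κ)/κ)·(σ^(κ/(1+κ)) − 1)`,
where `p(x) = (1/σ)·(1 + κ·x/σ)^(−(1+κ)/κ)`, `q = (1+2κ)/(1+κ)`, and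
`ln_κ(x) = (x^κ − 1)/κ`. -/
theorem stmt_14 (σ κ : ℝ) (hσ : 0 < σ) (hκ : 0 < κ) :
    (∫ x in Set.Ioi (0 : ℝ),
        (((1 / σ) * (1 + κ * x / σ) ^ (-(1 + κ) / κ)) ^ ((1 + 2 * κ) / (1 + κ)) /
            ∫ y in Set.Ioi (0 : ℝ),
              ((1 / σ) * (1 + κ * y / σ) ^ (-(1 + κ) / κ)) ^ ((1 + 2 * κ) / (1 + κ))) *
          (((((1 / σ) * (1 + κ * x / σ) ^ (-(1 + κ) / κ)) ^ (-(1 / (1 + κ)))) ^ κ - 1) / κ))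
      = 1 + ((1 + κ) / κ) * (σ ^ (κ / (1 + κ)) - 1) := by
  have ha : 0 < κ / σ := div_pos hκ hσ
  have hr : 1 < (1 + 2 * κ) / κ := by rw [lt_div_iff₀ hκ]; linarith
  have hr' : 1 < (1 + κ) / κ := by rw [lt_div_iff₀ hκ]; linarith
  simp only [mul_div_right_comm κ]
  rw [integral_Ioi_coupledExp_rpow_escort hσ hκ,
    setIntegral_congr_fun measurableSet_Ioi fun x hx =>
      coupledExp_escort_mul_coupledLog hσ hκ (add_pos one_pos (mul_pos ha hx)),
    integral_const_mul,
    integral_sub ((integrableOn_Ioi_one_add_mul_rpow_neg ha hr').const_mul _)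
      (integrableOn_Ioi_one_add_mul_rpow_neg ha hr),
    integral_const_mul, integral_Ioi_one_add_mul_rpow_neg ha hr',
    integral_Ioi_one_add_mul_rpow_neg ha hr, div_sub_one hκ.ne', div_sub_one hκ.ne',
    show 1 + κ - κ = 1 by ring, show 1 + 2 * κ - κ = 1 + κ by ring]
  field_simp
  ring
end

section
/- For every σ > 0 and κ > 0, the continuous normalized Tsallis entropy with index q = (1+2κ)/(1+κ) of the coupled exponential density equals S^NT = (1/(q−1))·((∫₀^∞ p(x)^q dx)^(−1) − 1) = 1 + κ + (1+κ)·ln_{κ/(1+κ)}(σ), where p(x) = (1/σ)·(1 + κ·x/σ)^(−(1+κ)/κ). -/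
/-!
The index `q = (1 + 2κ)/(1 + κ)` is chosen so that `p^q` is again a power of `1 + κx/σ`, namely
`p(x)^q = σ^(-q) (1 + κx/σ)^(-(1+κ)/κ - 1)`, which has the elementary antiderivative
`-(σ^(1-q)/(1+κ)) (1 + κx/σ)^(-(1+κ)/κ)`. Hence `∫₀^∞ p^q = σ^(-κ/(1+κ))/(1+κ)`, and the claimed
closed form is algebra with `q - 1 = κ/(1+κ)`.
-/

open Real MeasureTheory Filter Set Topology

theorem integral_Ioi_one_add_mul_rpow_neg_sub_one {a s : ℝ} (ha : 0 < a) (hs : 0 < s) :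
    ∫ x in Ioi (0 : ℝ), (1 + a * x) ^ (-s - 1) = (a * s)⁻¹ := by
  have hbase : ∀ x : ℝ, 0 ≤ x → 0 < 1 + a * x := fun x hx => by positivity
  have hderiv : ∀ x ∈ Ici (0 : ℝ),
      HasDerivAt (fun y => -(a * s)⁻¹ * (1 + a * y) ^ (-s)) ((1 + a * x) ^ (-s - 1)) x := by
    intro x hx
    have hinner : HasDerivAt (fun y : ℝ => 1 + a * y) a x := by
      simpa using ((hasDerivAt_id x).const_mul a).const_add 1
    refine ((hinner.rpow_const (Or.inl (hbase x hx).ne')).const_mul (-(a * s)⁻¹)).congr_deriv ?_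
    field_simp
  have hlim : Tendsto (fun y => -(a * s)⁻¹ * (1 + a * y) ^ (-s)) atTop (𝓝 0) := by
    have hinner : Tendsto (fun y : ℝ => 1 + a * y) atTop atTop :=
      tendsto_atTop_add_const_left _ _ (tendsto_id.const_mul_atTop ha)
    simpa using ((tendsto_rpow_neg_atTop hs).comp hinner).const_mul (-(a * s)⁻¹)
  have hnonneg : ∀ x ∈ Ioi (0 : ℝ), 0 ≤ (1 + a * x) ^ (-s - 1) := fun x hx =>
    rpow_nonneg (hbase x (le_of_lt hx)).le _
  rw [integral_Ioi_of_hasDerivAt_of_nonneg' hderiv hnonneg hlim]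
  simp

theorem integral_Ioi_coupledExp_density_rpow {σ κ : ℝ} (hσ : 0 < σ) (hκ : 0 < κ) :
    ∫ x in Ioi (0 : ℝ), ((1 / σ) * (1 + κ * x / σ) ^ (-(1 + κ) / κ)) ^ ((1 + 2 * κ) / (1 + κ))
      = (σ ^ (κ / (1 + κ)) * (1 + κ))⁻¹ := by
  set q := (1 + 2 * κ) / (1 + κ) with hq
  have hpow : ∀ x ∈ Ioi (0 : ℝ),
      ((1 / σ) * (1 + κ * x / σ) ^ (-(1 + κ) / κ)) ^ q
        = σ ^ (-q) * (1 + κ / σ * x) ^ (-((1 + κ) / κ) - 1) := by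
    intro x hx
    have hbase : 0 < 1 + κ * x / σ := by have : 0 < x := hx; positivity
    have hexp : -(1 + κ) / κ * q = -((1 + κ) / κ) - 1 := by rw [hq]; field_simp; ring
    rw [mul_rpow (by positivity) (rpow_nonneg hbase.le _), one_div, inv_rpow hσ.le,
      ← rpow_neg hσ.le, ← rpow_mul hbase.le, hexp, div_mul_eq_mul_div]
  rw [setIntegral_congr_fun measurableSet_Ioi hpow, integral_const_mul,
    integral_Ioi_one_add_mul_rpow_neg_sub_one (by positivity) (by positivity)]
  have hexp : -q = -(κ / (1 + κ)) - 1 := by rw [hq]; field_simp; ring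
  rw [hexp, rpow_sub_one hσ.ne', rpow_neg hσ.le]
  field_simp

/-- The continuous normalized Tsallis entropy with index `q = (1+2κ)/(1+κ)` of the
coupled exponential density `p(x) = (1/σ)·(1 + κ·x/σ)^(−(1+κ)/κ)` equals
`(1/(q−1))·((∫₀^∞ p(x)^q dx)⁻¹ − 1) = 1 + κ + (1+κ)·ln_{κ/(1+κ)}(σ)`,
where `ln_κ(x) = (x^κ − 1)/κ`. -/
theorem stmt_16 (σ κ : ℝ) (hσ : 0 < σ) (hκ : 0 < κ) :
    (1 / ((1 + 2 * κ) / (1 + κ) - 1)) *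
        ((∫ x in Set.Ioi (0 : ℝ),
            ((1 / σ) * (1 + κ * x / σ) ^ (-(1 + κ) / κ)) ^ ((1 + 2 * κ) / (1 + κ)))⁻¹ - 1)
      = 1 + κ + (1 + κ) * ((σ ^ (κ / (1 + κ)) - 1) / (κ / (1 + κ))) := by
  rw [integral_Ioi_coupledExp_density_rpow hσ hκ, inv_inv]
  have hq : (1 + 2 * κ) / (1 + κ) - 1 = κ / (1 + κ) := by field_simp; ring
  rw [hq]
  field_simp
  ring
end

section
/- Fix σ > 0 and for each κ > 0 let H_κ = 1 + ((1+κ)/κ)·(σ^(κ/(1+κ)) − 1) be the coupled entropy, S^T_κ = 1 + 1/κ − σ^(−κ/(1+κ))/κ the Tsallis entropy, and S^NT_κ = (1+κ)·H_κ the normalized Tsallis entropy of the coupled exponential density with scale σ and coupling κ. Then as κ → ∞: H_κ → σ, S^T_κ → 1, and S^NT_κ → +∞. Hence only the coupled entropy converges to the scale as the coupling increases: the Tsallis entropy converges to a constant independent of σ and the normalized Tsallis entropy diverges. -/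
/-!
Write `a κ = κ / (1 + κ)`, so that `(1 + κ) / κ = 1 / a κ` and `a κ → 1`. By continuity of
`x ↦ σ ^ x` at `±1`, the powers `σ ^ (± a κ)` tend to `σ ^ (± 1)`, which gives
`H_κ → 1 + (σ - 1) = σ`, and the `1 / κ` factors of the Tsallis entropy kill its
`σ`-dependence. Since `σ > 0`, the normalized Tsallis entropy `(1 + κ) · H_κ` is a
divergent factor times a factor with positive limit.
-/

open Real Filter Topology

lemma tendsto_one_add_self_div_self_atTop :
    Tendsto (fun x : ℝ => (1 + x) / x) atTop (𝓝 1) := by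
  have h : Tendsto (fun x : ℝ => x⁻¹ + 1) atTop (𝓝 1) := by
    simpa using tendsto_inv_atTop_zero.add_const (1 : ℝ)
  refine h.congr' ?_
  filter_upwards [eventually_ne_atTop 0] with x hx
  rw [add_div, one_div, div_self hx]

lemma tendsto_self_div_one_add_self_atTop :
    Tendsto (fun x : ℝ => x / (1 + x)) atTop (𝓝 1) := by
  simpa only [inv_div, inv_one] using tendsto_one_add_self_div_self_atTop.inv₀ one_ne_zero

lemma Filter.Tendsto.const_rpow {α : Type*} {l : Filter α} {f : α → ℝ} {b : ℝ}
    (hf : Tendsto f l (𝓝 b)) {a : ℝ} (ha : a ≠ 0) :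
    Tendsto (fun x => a ^ f x) l (𝓝 (a ^ b)) :=
  (continuousAt_const_rpow ha).tendsto.comp hf

lemma tendsto_coupledEntropy_atTop {σ : ℝ} (hσ : σ ≠ 0) :
    Tendsto (fun κ : ℝ => 1 + ((1 + κ) / κ) * (σ ^ (κ / (1 + κ)) - 1)) atTop (𝓝 σ) := by
  have hpow := tendsto_self_div_one_add_self_atTop.const_rpow hσ
  simpa using (tendsto_one_add_self_div_self_atTop.mul (hpow.sub_const 1)).const_add 1

lemma tendsto_tsallisEntropy_atTop {σ : ℝ} (hσ : σ ≠ 0) :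
    Tendsto (fun κ : ℝ => 1 + 1 / κ - σ ^ (-κ / (1 + κ)) / κ) atTop (𝓝 1) := by
  have hexp : Tendsto (fun κ : ℝ => -κ / (1 + κ)) atTop (𝓝 (-1)) := by
    simpa only [neg_div] using tendsto_self_div_one_add_self_atTop.neg
  have hinv : Tendsto (fun κ : ℝ => 1 / κ) atTop (𝓝 0) := tendsto_const_nhds.div_atTop tendsto_id
  have hpow : Tendsto (fun κ : ℝ => σ ^ (-κ / (1 + κ)) / κ) atTop (𝓝 0) :=
    (hexp.const_rpow hσ).div_atTop tendsto_id
  simpa using (hinv.const_add 1).sub hpow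

/-- Asymptotics as the coupling `κ → ∞` for the coupled exponential density with
scale `σ`: the coupled entropy `H_κ = 1 + ((1+κ)/κ)·(σ^(κ/(1+κ)) − 1)` converges
to the scale `σ`; the Tsallis entropy `S^T_κ = 1 + 1/κ − σ^(−κ/(1+κ))/κ` converges
to the constant `1` (independent of `σ`); and the normalized Tsallis entropy
`S^NT_κ = (1+κ)·H_κ` diverges to `+∞`. -/
theorem stmt_17 (σ : ℝ) (hσ : 0 < σ) :
    Filter.Tendsto (fun κ : ℝ => 1 + ((1 + κ) / κ) * (σ ^ (κ / (1 + κ)) - 1))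
      Filter.atTop (nhds σ)
    ∧ Filter.Tendsto (fun κ : ℝ => 1 + 1 / κ - σ ^ (-κ / (1 + κ)) / κ)
      Filter.atTop (nhds 1)
    ∧ Filter.Tendsto
        (fun κ : ℝ => (1 + κ) * (1 + ((1 + κ) / κ) * (σ ^ (κ / (1 + κ)) - 1)))
        Filter.atTop Filter.atTop := by
  have hH := tendsto_coupledEntropy_atTop hσ.ne'
  refine ⟨hH, tendsto_tsallisEntropy_atTop hσ.ne', ?_⟩
  exact (tendsto_atTop_add_const_left atTop 1 tendsto_id).atTop_mul_pos hσ hH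
end

section
/- Let κ > 0, β > 0, W ≥ 1, and let E₁, …, E_W ≥ 0 be energies. Define the coupled Boltzmann–Gibbs distribution p_i = (1/Z_κ)·(1 + κ·β·E_i)^(−(1+κ)/κ) with partition function Z_κ = Σ_{j=1}^W (1 + κ·β·E_j)^(−(1+κ)/κ), and the generalized internal energy U_κ = Σ_i P_i^(q)·E_i with q = 1 + κ/(1+κ) and P_i^(q) = p_i^q / Σ_j p_j^q. Then the Type I coupled entropy of p satisfies S_κ(p) = ln_κ(Z_κ^(1/(1+κ))) + β·U_κ + κ·ln_κ(Z_κ^(1/(1+κ)))·β·U_κ, i.e. S_κ(p) = ln_κ(Z_κ^(1/(1+κ))) ⊕_κ β·U_κ. -/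
/-!
Write `tᵢ = 1 + κβEᵢ`, so that `pᵢ = Z⁻¹ tᵢ^(-(1+κ)/κ)` and
`pᵢ^(-1/(1+κ)) = Z^(1/(1+κ)) · exp_κ(βEᵢ)`. The coupled logarithm turns products into coupled sums
and inverts the coupled exponential, hence `ln_κ(pᵢ^(-1/(1+κ))) = ln_κ(Z^(1/(1+κ))) ⊕_κ βEᵢ`.
Since `a ⊕_κ b = a + (1 + κa)·b` is affine in `b`, averaging against the escort distribution
gives `S_κ(p) = ln_κ(Z^(1/(1+κ))) ⊕_κ βU_κ`.
-/

open Real Finset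

noncomputable section

def coupledExp (κ x : ℝ) : ℝ := (1 + κ * x) ^ (1 / κ)

def coupledLog (κ x : ℝ) : ℝ := (x ^ κ - 1) / κ

def coupledSum (κ a b : ℝ) : ℝ := a + b + κ * a * b

theorem coupledExp_nonneg {κ x : ℝ} (hx : 0 ≤ 1 + κ * x) : 0 ≤ coupledExp κ x :=
  rpow_nonneg hx _

theorem coupledLog_coupledExp {κ x : ℝ} (hκ : κ ≠ 0) (hx : 0 ≤ 1 + κ * x) :
    coupledLog κ (coupledExp κ x) = x := by
  rw [coupledLog, coupledExp, one_div, rpow_inv_rpow hx hκ]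
  field_simp
  ring

theorem coupledLog_mul {κ x y : ℝ} (hκ : κ ≠ 0) (hx : 0 ≤ x) (hy : 0 ≤ y) :
    coupledLog κ (x * y) = coupledSum κ (coupledLog κ x) (coupledLog κ y) := by
  rw [coupledLog, coupledLog, coupledLog, coupledSum, mul_rpow hx hy]
  field_simp
  ring

theorem sum_mul_coupledSum {ι : Type*} {s : Finset ι} {w f : ι → ℝ} (hw : ∑ i ∈ s, w i = 1)
    (κ a : ℝ) :
    ∑ i ∈ s, w i * coupledSum κ a (f i) = coupledSum κ a (∑ i ∈ s, w i * f i) := by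
  have hsplit : ∀ i, w i * coupledSum κ a (f i) = w i * a + (1 + κ * a) * (w i * f i) :=
    fun i => by rw [coupledSum]; ring
  rw [sum_congr rfl fun i _ => hsplit i, sum_add_distrib, ← sum_mul, ← mul_sum, hw, coupledSum]
  ring

theorem rpow_neg_inv_one_add_of_coupledGibbs {κ Z x : ℝ} (hκ : 1 + κ ≠ 0) (hZ : 0 ≤ Z)
    (hx : 0 ≤ 1 + κ * x) :
    ((1 / Z) * (1 + κ * x) ^ (-(1 + κ) / κ)) ^ (-(1 / (1 + κ)))
      = Z ^ (1 / (1 + κ)) * coupledExp κ x := by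
  have hexp : -(1 + κ) / κ * -(1 / (1 + κ)) = 1 / κ := by field_simp
  rw [mul_rpow (by positivity) (rpow_nonneg hx _), ← rpow_mul hx, hexp, one_div Z,
    inv_rpow hZ, ← rpow_neg hZ, neg_neg, coupledExp]

end

/-- Thermodynamic relation for the coupled Boltzmann–Gibbs distribution
`p_i = (1/Z_κ)·(1 + κ·β·E_i)^(−(1+κ)/κ)` with partition function
`Z_κ = Σ_j (1 + κ·β·E_j)^(−(1+κ)/κ)`: the Type I coupled entropy of `p` equals
the coupled sum `ln_κ(Z_κ^(1/(1+κ))) ⊕_κ β·U_κ`, where `U_κ = Σ_i P_i^(q)·E_i`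
is the generalized internal energy with escort exponent `q = 1 + κ/(1+κ)` and
`ln_κ(x) = (x^κ − 1)/κ`, and `a ⊕_κ b = a + b + κ·a·b`. -/
theorem stmt_19 (κ β : ℝ) (hκ : 0 < κ) (hβ : 0 < β)
    (W : ℕ) (hW : 1 ≤ W) (E : Fin W → ℝ) (hE : ∀ i, 0 ≤ E i) :
    let Z : ℝ := ∑ j, (1 + κ * (β * E j)) ^ (-(1 + κ) / κ)
    let p : Fin W → ℝ := fun i => (1 / Z) * (1 + κ * (β * E i)) ^ (-(1 + κ) / κ)
    let q : ℝ := 1 + κ / (1 + κ)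
    let U : ℝ := ∑ i, (p i ^ q / ∑ j, p j ^ q) * E i
    let lnκZ : ℝ := ((Z ^ ((1 : ℝ) / (1 + κ))) ^ κ - 1) / κ
    ∑ i, (p i ^ q / ∑ j, p j ^ q) * (((p i ^ (-(1 / (1 + κ)))) ^ κ - 1) / κ)
      = lnκZ + β * U + κ * lnκZ * (β * U) := by
  intro Z p q U lnκZ
  have ht : ∀ i, 0 < 1 + κ * (β * E i) := fun i => by have := hE i; positivity
  have hZ : 0 < Z := sum_pos (fun i _ => rpow_pos_of_pos (ht i) _) ⟨⟨0, hW⟩, mem_univ _⟩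
  have hp : ∀ i, 0 < p i := fun i => by have := ht i; positivity
  have hescort : ∑ i, p i ^ q / ∑ j, p j ^ q = 1 := by
    rw [← sum_div, div_self (sum_pos (fun j _ => rpow_pos_of_pos (hp j) q)
      ⟨⟨0, hW⟩, mem_univ _⟩).ne']
  have hlog : ∀ i, coupledLog κ (p i ^ (-(1 / (1 + κ)))) = coupledSum κ lnκZ (β * E i) := by
    intro i
    rw [rpow_neg_inv_one_add_of_coupledGibbs (by positivity) hZ.le (ht i).le,
      coupledLog_mul hκ.ne' (by positivity) (coupledExp_nonneg (ht i).le),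
      coupledLog_coupledExp hκ.ne' (ht i).le]
    rfl
  change ∑ i, _ * coupledLog κ (p i ^ (-(1 / (1 + κ)))) = coupledSum κ lnκZ (β * U)
  simp only [hlog]
  rw [sum_mul_coupledSum hescort, mul_sum]
  simp only [mul_left_comm β]
end
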